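/- arXiv:1310.7260 — 2 statements merged into one kernel-verified Lean document; each statement's English description precedes it below -/
import Mathlib

section
/- For every ε > 0, limsup_{k→∞} limsup_{n→∞} (1/n)·log P( ∑_{p ∈ S(k,n)} Y_p² > n²ε ) = −∞; that is, for every M > 0 there exists K such that for all k ≥ K, limsup_{n→∞} (1/n)·log P( ∑_{p ∈ S(k,n)} Y_p² > n²ε ) ≤ −M. -/
open MeasureTheory ProbabilityTheory Filter Real
open scoped ENNReal Classical
open Finset

/-- The joint law of `n` i.i.d. random variables, each uniformly distributed on
`{1, 2, …, n}` (the coordinates `ω ↦ ω i` are the random variables `X_i`). -/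
noncomputable def unifVec (n : ℕ) : Measure (Fin n → ℕ) :=
  Measure.pi fun _ => uniformOn (Set.Icc 1 n)

/-- `S(k₁,k₂)`: the finite set of primes `p` with `k₁ < p ≤ k₂`. -/
def primesIn (k₁ k₂ : ℕ) : Finset ℕ := (Finset.Ioc k₁ k₂).filter Nat.Prime

/-- `Y_p = #{1 ≤ i ≤ n : p ∣ X_i}`. -/
def Yp (n : ℕ) (p : ℕ) (ω : Fin n → ℕ) : ℕ :=
  (Finset.univ.filter fun i : Fin n => p ∣ ω i).card

def c2 (k n a b : ℕ) : ℕ := ((primesIn k n).filter fun p => p ∣ a ∧ p ∣ b).card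

noncomputable def hfun (k n x : ℕ) : ℝ := ∑ p ∈ (primesIn k n).filter (· ∣ x), (p : ℝ)⁻¹

def Qm (k n : ℕ) {m : ℕ} (f : Fin m → ℕ) : ℕ :=
  ∑ j : Fin m, ∑ i ∈ Finset.univ.filter (fun i : Fin m => (i : ℕ) < (j : ℕ)),
    c2 k n (f i) (f j)

lemma uniformOn_Icc_singleton {n x : ℕ} (hx : x ∈ Set.Icc 1 n) :
    uniformOn (Set.Icc 1 n) {x} = (n : ℝ≥0∞)⁻¹ := by
  rw [uniformOn, cond_apply (measurableSet_Icc)]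
  have h1 : Set.Icc 1 n ∩ {x} = {x} := by
    simp [Set.inter_eq_right.mpr, Set.singleton_subset_iff, hx]
  rw [h1, Measure.count_singleton, mul_one]
  congr 1
  have : (Set.Icc 1 n : Set ℕ) = (Finset.Icc 1 n : Finset ℕ) := by
    ext y; simp
  rw [this, Measure.count_apply_finset]
  simp [Nat.card_Icc]

lemma unifVec_le_card (n : ℕ) (hn : 1 ≤ n) (A : Set (Fin n → ℕ)) :
    unifVec n A ≤
      (((Fintype.piFinset fun _ : Fin n => Finset.Icc 1 n).filter (· ∈ A)).card : ℝ≥0∞)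
        * ((n : ℝ≥0∞) ^ n)⁻¹ := by
  haveI hpm : IsProbabilityMeasure (uniformOn (Set.Icc 1 n : Set ℕ)) :=
    uniformOn_isProbabilityMeasure (Set.finite_Icc 1 n) ⟨1, by simp [hn]⟩
  haveI : IsProbabilityMeasure (unifVec n) := by
    unfold unifVec; infer_instance
  set box : Set (Fin n → ℕ) := Set.univ.pi fun _ => Set.Icc 1 n with hbox
  have hboxm : MeasurableSet box := MeasurableSet.univ_pi fun _ => measurableSet_Icc
  have hbox1 : unifVec n box = 1 := by
    rw [hbox, unifVec, Measure.pi_pi]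
    rw [uniformOn_self (Set.finite_Icc 1 n) ⟨1, by simp [hn]⟩]
    simp
  have hboxc : unifVec n boxᶜ = 0 := by
    rw [measure_compl hboxm (measure_ne_top _ _), hbox1, measure_univ]
    simp
  have hsub : A ⊆ (A ∩ box) ∪ boxᶜ := by
    intro f hf
    by_cases h : f ∈ box
    · exact Or.inl ⟨hf, h⟩
    · exact Or.inr h
  calc unifVec n A ≤ unifVec n ((A ∩ box) ∪ boxᶜ) := measure_mono hsub
    _ ≤ unifVec n (A ∩ box) + unifVec n boxᶜ := measure_union_le _ _
    _ = unifVec n (A ∩ box) := by rw [hboxc, add_zero]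
    _ ≤ _ := ?_
  set s := (Fintype.piFinset fun _ : Fin n => Finset.Icc 1 n).filter (· ∈ A) with hs
  have hAs : A ∩ box ⊆ ⋃ f ∈ s, {f} := by
    intro f hf
    simp only [Set.mem_iUnion, Set.mem_singleton_iff, exists_prop]
    refine ⟨f, ?_, rfl⟩
    rw [hs, Finset.mem_filter, Fintype.mem_piFinset]
    exact ⟨fun i => by simpa using hf.2 i (Set.mem_univ i), hf.1⟩
  calc unifVec n (A ∩ box) ≤ ∑ f ∈ s, unifVec n {f} :=
        le_trans (measure_mono hAs) (measure_biUnion_finset_le s _)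
    _ ≤ ∑ f ∈ s, ((n : ℝ≥0∞) ^ n)⁻¹ := ?_
    _ = (s.card : ℝ≥0∞) * ((n : ℝ≥0∞) ^ n)⁻¹ := by
        rw [Finset.sum_const, nsmul_eq_mul]
  refine Finset.sum_le_sum fun f hf => ?_
  rw [hs, Finset.mem_filter, Fintype.mem_piFinset] at hf
  have : ({f} : Set (Fin n → ℕ)) = Set.univ.pi fun i => {f i} := by
    ext g; simp [funext_iff]
  rw [this, unifVec, Measure.pi_pi]
  have : ∀ i : Fin n, uniformOn (Set.Icc 1 n) {f i} = (n : ℝ≥0∞)⁻¹ := fun i =>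
    uniformOn_Icc_singleton (by simpa using hf.1 i)
  simp [this, ENNReal.inv_pow]

lemma card_multiples (n d : ℕ) : ((Finset.Icc 1 n).filter (fun x => d ∣ x)).card = n / d := by
  rw [show Finset.Icc 1 n = Finset.Ioc 0 n from (Finset.Icc_add_one_left_eq_Ioc 0 n)]
  exact Nat.Ioc_filter_dvd_card_eq_div n d

lemma card_multiples_le (n d : ℕ) (hd : 1 ≤ d) :
    ((((Finset.Icc 1 n).filter (fun x => d ∣ x)).card : ℝ)) ≤ (n : ℝ) * (d : ℝ)⁻¹ := by
  rw [card_multiples, ← div_eq_mul_inv]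
  exact_mod_cast Nat.cast_div_le

lemma expand_lemma (k n : ℕ) (w : ℕ → ℝ) (hw : ∀ p ∈ primesIn k n, 1 ≤ w p) :
    ∑ x ∈ Finset.Icc 1 n, ∏ p ∈ (primesIn k n).filter (· ∣ x), w p
      ≤ (n : ℝ) * ∏ p ∈ primesIn k n, (1 + (w p - 1) * (p : ℝ)⁻¹) := by
  set P := primesIn k n with hP
  have hprime : ∀ p ∈ P, Nat.Prime p := fun p hp => (Finset.mem_filter.1 hp).2
  have hx : ∀ x : ℕ, ∏ p ∈ P.filter (· ∣ x), w p
      = ∑ A ∈ P.powerset, (∏ p ∈ A, (w p - 1)) * (if ∀ p ∈ A, p ∣ x then 1 else 0) := by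
    intro x
    rw [Finset.prod_filter]
    have : ∀ p ∈ P, (if p ∣ x then w p else 1)
        = (w p - 1) * (if p ∣ x then (1:ℝ) else 0) + 1 := by
      intro p _; split_ifs <;> ring
    rw [Finset.prod_congr rfl this, Finset.prod_add]
    refine Finset.sum_congr rfl fun A hA => ?_
    rw [Finset.prod_const_one, mul_one, Finset.prod_mul_distrib, Finset.prod_boole]
  calc ∑ x ∈ Finset.Icc 1 n, ∏ p ∈ P.filter (· ∣ x), w p
      = ∑ A ∈ P.powerset, (∏ p ∈ A, (w p - 1)) *
          (((Finset.Icc 1 n).filter (fun x => ∏ p ∈ A, p ∣ x)).card : ℝ) := by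
        rw [Finset.sum_congr rfl fun x _ => hx x, Finset.sum_comm]
        refine Finset.sum_congr rfl fun A hA => ?_
        rw [← Finset.mul_sum]
        congr 1
        have : ∀ x : ℕ, (if ∀ p ∈ A, p ∣ x then (1:ℝ) else 0)
            = (if ∏ p ∈ A, p ∣ x then (1:ℝ) else 0) := by
          intro x
          congr 1
          simp only [eq_iff_iff]
          constructor
          · intro h
            exact Finset.prod_primes_dvd x
              (fun p hp => (hprime p (Finset.mem_powerset.1 hA hp)).prime)
              (fun p hp => h p hp)
          · intro h p hp
            exact dvd_trans (Finset.dvd_prod_of_mem _ hp) h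
        rw [Finset.sum_congr rfl fun x _ => this x, Finset.sum_boole]
    _ ≤ ∑ A ∈ P.powerset, (∏ p ∈ A, (w p - 1)) * ((n : ℝ) * ∏ p ∈ A, (p : ℝ)⁻¹) := by
        refine Finset.sum_le_sum fun A hA => ?_
        refine mul_le_mul_of_nonneg_left ?_
          (Finset.prod_nonneg fun p hp =>
            sub_nonneg.2 (hw p (Finset.mem_powerset.1 hA hp)))
        have : ((∏ p ∈ A, p : ℕ) : ℝ)⁻¹ = ∏ p ∈ A, (p : ℝ)⁻¹ := by
          push_cast; rw [← Finset.prod_inv_distrib]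
        rw [← this]
        exact card_multiples_le n _ (Finset.one_le_prod' fun p hp =>
          (hprime p (Finset.mem_powerset.1 hA hp)).one_lt.le)
    _ = (n : ℝ) * ∑ A ∈ P.powerset, ∏ p ∈ A, ((w p - 1) * (p : ℝ)⁻¹) := by
        rw [Finset.mul_sum]
        refine Finset.sum_congr rfl fun A hA => ?_
        rw [Finset.prod_mul_distrib]; ring
    _ = (n : ℝ) * ∏ p ∈ P, ((w p - 1) * (p : ℝ)⁻¹ + 1) := by
        congr 1
        rw [Finset.prod_add]
        refine (Finset.sum_congr rfl fun A hA => ?_).symm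
        rw [Finset.prod_const_one, mul_one]
    _ = (n : ℝ) * ∏ p ∈ P, (1 + (w p - 1) * (p : ℝ)⁻¹) := by
        congr 1
        exact Finset.prod_congr rfl fun p _ => by ring

lemma exp_sub_one_le {u T : ℝ} (hu : 0 ≤ u) (huT : u ≤ T) :
    Real.exp u - 1 ≤ u * Real.exp T := by
  have h1 : Real.exp u * (1 - u) ≤ 1 := by
    have h2 : (1 - u) ≤ Real.exp (-u) := by
      have := Real.add_one_le_exp (-u); linarith
    calc Real.exp u * (1 - u) ≤ Real.exp u * Real.exp (-u) :=
          mul_le_mul_of_nonneg_left h2 (Real.exp_nonneg u)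
      _ = 1 := by rw [← Real.exp_add]; simp
  have h3 : Real.exp u - 1 ≤ u * Real.exp u := by nlinarith
  calc Real.exp u - 1 ≤ u * Real.exp u := h3
    _ ≤ u * Real.exp T := mul_le_mul_of_nonneg_left (Real.exp_le_exp.2 huT) hu

lemma step_general (k n : ℕ) (T : ℝ) (t : ℕ → ℝ)
    (ht0 : ∀ p ∈ primesIn k n, 0 ≤ t p) (htT : ∀ p ∈ primesIn k n, t p ≤ T) :
    ∑ x ∈ Finset.Icc 1 n, Real.exp (∑ p ∈ (primesIn k n).filter (· ∣ x), t p)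
      ≤ (n : ℝ) * Real.exp (Real.exp T * ∑ p ∈ primesIn k n, t p * (p : ℝ)⁻¹) := by
  set P := primesIn k n with hP
  have step1 : ∑ x ∈ Finset.Icc 1 n, Real.exp (∑ p ∈ P.filter (· ∣ x), t p)
      ≤ (n : ℝ) * ∏ p ∈ P, (1 + (Real.exp (t p) - 1) * (p : ℝ)⁻¹) := by
    have := expand_lemma k n (fun p => Real.exp (t p))
      (fun p hp => Real.one_le_exp (ht0 p hp))
    simpa [Real.exp_sum] using this
  refine step1.trans (mul_le_mul_of_nonneg_left ?_ (Nat.cast_nonneg n))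
  calc ∏ p ∈ P, (1 + (Real.exp (t p) - 1) * (p : ℝ)⁻¹)
      ≤ ∏ p ∈ P, Real.exp ((Real.exp (t p) - 1) * (p : ℝ)⁻¹) := by
        refine Finset.prod_le_prod (fun p hp => ?_) (fun p hp => ?_)
        · have h0 : 0 ≤ (Real.exp (t p) - 1) * (p : ℝ)⁻¹ :=
            mul_nonneg (by linarith [Real.one_le_exp (ht0 p hp)]) (by positivity)
          linarith
        · have := Real.add_one_le_exp ((Real.exp (t p) - 1) * (p : ℝ)⁻¹)
          linarith
    _ = Real.exp (∑ p ∈ P, (Real.exp (t p) - 1) * (p : ℝ)⁻¹) := (Real.exp_sum _ _).symm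
    _ ≤ Real.exp (Real.exp T * ∑ p ∈ P, t p * (p : ℝ)⁻¹) := by
        rw [Real.exp_le_exp, Finset.mul_sum]
        refine Finset.sum_le_sum fun p hp => ?_
        have := exp_sub_one_le (ht0 p hp) (htT p hp)
        calc (Real.exp (t p) - 1) * (p : ℝ)⁻¹ ≤ (t p * Real.exp T) * (p : ℝ)⁻¹ :=
              mul_le_mul_of_nonneg_right this (by positivity)
          _ = Real.exp T * (t p * (p : ℝ)⁻¹) := by ring

lemma hfun_nonneg (k n x : ℕ) : 0 ≤ hfun k n x :=
  Finset.sum_nonneg fun p _ => by positivity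

lemma sum_inv_sq_le (k n : ℕ) (hk : 1 ≤ k) :
    ∑ p ∈ primesIn k n, ((p : ℝ)⁻¹) ^ 2 ≤ (k : ℝ)⁻¹ := by
  have h1 : ∑ p ∈ primesIn k n, ((p : ℝ)⁻¹) ^ 2 ≤ ∑ m ∈ Finset.Ioc k n, ((m : ℝ)⁻¹) ^ 2 :=
    Finset.sum_le_sum_of_subset_of_nonneg (Finset.filter_subset _ _) fun m _ _ => by positivity
  refine h1.trans ?_
  rcases le_or_gt k n with hkn | hkn
  · have aux : ∀ N, k ≤ N → ∑ m ∈ Finset.Ioc k N, ((m : ℝ)⁻¹) ^ 2 ≤ (k : ℝ)⁻¹ - (N : ℝ)⁻¹ := by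
      intro N hN
      induction N, hN using Nat.le_induction with
      | base => simp
      | succ N hN ih =>
        rw [Finset.sum_Ioc_succ_top hN]
        have hNpos : (0:ℝ) < N := by
          have : (1:ℝ) ≤ (k:ℝ) := by exact_mod_cast hk
          have : (k:ℝ) ≤ N := by exact_mod_cast hN
          linarith [show (1:ℝ) ≤ (k:ℝ) from by exact_mod_cast hk]
        have key : (((N:ℝ) + 1)⁻¹) ^ 2 ≤ (N : ℝ)⁻¹ - ((N:ℝ) + 1)⁻¹ := by
          rw [show (N:ℝ)⁻¹ - ((N:ℝ)+1)⁻¹ = ((N:ℝ) * ((N:ℝ)+1))⁻¹ by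
            field_simp; ring]
          rw [sq, ← mul_inv]
          refine inv_anti₀ (by positivity) ?_
          nlinarith
        have : ((N+1 : ℕ) : ℝ) = (N : ℝ) + 1 := by push_cast; ring
        rw [this]
        linarith
    have := aux n hkn
    have hn0 : (0:ℝ) ≤ (n:ℝ)⁻¹ := by positivity
    linarith
  · rw [Finset.Ioc_eq_empty (by omega)]
    simp

lemma swap1 (k n : ℕ) {m : ℕ} (v : Fin m → ℕ) (x : ℕ) :
    ∑ p ∈ (primesIn k n).filter (· ∣ x),
        ((Finset.univ.filter fun i : Fin m => p ∣ v i).card : ℝ)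
      = ∑ i : Fin m, (c2 k n (v i) x : ℝ) := by
  have : ∀ p, ((Finset.univ.filter fun i : Fin m => p ∣ v i).card : ℝ)
      = ∑ i : Fin m, if p ∣ v i then (1:ℝ) else 0 := by
    intro p; rw [Finset.card_filter]; push_cast; simp
  rw [Finset.sum_congr rfl fun p _ => this p, Finset.sum_comm]
  refine Finset.sum_congr rfl fun i _ => ?_
  rw [Finset.sum_filter, c2, Finset.card_filter]
  push_cast
  refine Finset.sum_congr rfl fun p _ => ?_
  by_cases h1 : p ∣ v i <;> by_cases h2 : p ∣ x <;> simp [h1, h2]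

lemma swap2 (k n : ℕ) {m : ℕ} (v : Fin m → ℕ) :
    ∑ p ∈ primesIn k n,
        ((Finset.univ.filter fun i : Fin m => p ∣ v i).card : ℝ) * (p : ℝ)⁻¹
      = ∑ i : Fin m, hfun k n (v i) := by
  have : ∀ p : ℕ, ((Finset.univ.filter fun i : Fin m => p ∣ v i).card : ℝ) * (p : ℝ)⁻¹
      = ∑ i : Fin m, if p ∣ v i then (p:ℝ)⁻¹ else 0 := by
    intro p; rw [Finset.card_filter]; push_cast
    rw [Finset.sum_mul]
    refine Finset.sum_congr rfl fun i _ => ?_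
    by_cases h : p ∣ v i <;> simp [h]
  rw [Finset.sum_congr rfl fun p _ => this p, Finset.sum_comm]
  exact Finset.sum_congr rfl fun i _ => by rw [hfun, Finset.sum_filter]

lemma prime_mem_bounds {k n p : ℕ} (hp : p ∈ primesIn k n) : k < p ∧ p ≤ n :=
  ⟨(Finset.mem_Ioc.1 (Finset.mem_filter.1 hp).1).1, (Finset.mem_Ioc.1 (Finset.mem_filter.1 hp).1).2⟩

lemma step_bound (k n m : ℕ) (hk1 : 1 ≤ k) (hmn : m ≤ n) (lam β : ℝ)
    (hlam : 0 ≤ lam) (hβ : 0 ≤ β) (hβk : β ≤ k)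
    (hkE : Real.exp (lam * n + 1) * β ≤ k) (v : Fin m → ℕ) :
    ∑ x ∈ Finset.Icc 1 n, Real.exp (lam * ∑ i, (c2 k n (v i) x : ℝ) + β * hfun k n x)
      ≤ (n : ℝ) * Real.exp
          (lam * Real.exp (lam * n + 1) * ∑ i, hfun k n (v i) + 1) := by
  classical
  set P := primesIn k n with hP
  set Yv : ℕ → ℕ := fun p => (Finset.univ.filter fun i : Fin m => p ∣ v i).card with hYv
  set t : ℕ → ℝ := fun p => lam * (Yv p : ℝ) + β * (p : ℝ)⁻¹ with ht
  set T : ℝ := lam * n + 1 with hT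
  have hkpos : (0:ℝ) < k := by exact_mod_cast hk1
  -- bounds on t
  have ht0 : ∀ p ∈ P, 0 ≤ t p := by
    intro p hp
    have : (0:ℝ) ≤ (p:ℝ)⁻¹ := by positivity
    have : (0:ℝ) ≤ (Yv p : ℝ) := by positivity
    positivity
  have htT : ∀ p ∈ P, t p ≤ T := by
    intro p hp
    obtain ⟨hpk, hpn⟩ := prime_mem_bounds hp
    have hYm : (Yv p : ℝ) ≤ (n : ℝ) := by
      have h1 : Yv p ≤ m := le_trans (Finset.card_filter_le _ _) (by simp)
      exact_mod_cast le_trans h1 hmn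
    have hpinv : (p:ℝ)⁻¹ ≤ (k:ℝ)⁻¹ := by
      apply inv_anti₀ hkpos
      exact_mod_cast hpk.le
    have h2 : β * (p:ℝ)⁻¹ ≤ 1 := by
      calc β * (p:ℝ)⁻¹ ≤ (k:ℝ) * (k:ℝ)⁻¹ :=
            mul_le_mul hβk hpinv (by positivity) (by positivity)
        _ = 1 := mul_inv_cancel₀ hkpos.ne'
    have h1 : lam * (Yv p : ℝ) ≤ lam * n := mul_le_mul_of_nonneg_left hYm hlam
    rw [ht, hT]; dsimp only; linarith
  -- identity for the exponent
  have hident : ∀ x : ℕ, ∑ p ∈ P.filter (· ∣ x), t p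
      = lam * ∑ i, (c2 k n (v i) x : ℝ) + β * hfun k n x := by
    intro x
    rw [ht]
    dsimp only
    rw [Finset.sum_add_distrib, ← Finset.mul_sum, ← Finset.mul_sum]
    rw [swap1 k n v x]
    rfl
  have hident2 : Real.exp T * ∑ p ∈ P, t p * (p : ℝ)⁻¹
      ≤ lam * Real.exp T * ∑ i, hfun k n (v i) + 1 := by
    have expand : ∑ p ∈ P, t p * (p : ℝ)⁻¹
        = ∑ i, hfun k n (v i) * lam + β * ∑ p ∈ P, ((p:ℝ)⁻¹)^2 := by
      rw [ht]
      dsimp only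
      have : ∀ p ∈ P, (lam * (Yv p : ℝ) + β * (p : ℝ)⁻¹) * (p:ℝ)⁻¹
          = lam * ((Yv p : ℝ) * (p:ℝ)⁻¹) + β * ((p:ℝ)⁻¹)^2 := by
        intro p _; ring
      rw [Finset.sum_congr rfl this, Finset.sum_add_distrib, ← Finset.mul_sum, ← Finset.mul_sum]
      rw [swap2 k n v]
      congr 1
      rw [Finset.mul_sum]
      exact Finset.sum_congr rfl fun i _ => by ring
    rw [expand]
    have hsum_nonneg : 0 ≤ ∑ i, hfun k n (v i) :=
      Finset.sum_nonneg fun i _ => hfun_nonneg k n (v i)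
    have hB : β * ∑ p ∈ P, ((p:ℝ)⁻¹)^2 ≤ β * (k:ℝ)⁻¹ :=
      mul_le_mul_of_nonneg_left (sum_inv_sq_le k n hk1) hβ
    have hB2 : Real.exp T * (β * (k:ℝ)⁻¹) ≤ 1 := by
      rw [show Real.exp T * (β * (k:ℝ)⁻¹) = (Real.exp T * β) * (k:ℝ)⁻¹ by ring]
      calc (Real.exp T * β) * (k:ℝ)⁻¹ ≤ (k:ℝ) * (k:ℝ)⁻¹ := by
            apply mul_le_mul_of_nonneg_right _ (by positivity)
            rw [hT]; exact hkE
        _ = 1 := mul_inv_cancel₀ hkpos.ne'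
    have hTnn : (0:ℝ) ≤ Real.exp T := Real.exp_nonneg T
    have hBsum : 0 ≤ β * ∑ p ∈ P, ((p:ℝ)⁻¹)^2 :=
      mul_nonneg hβ (Finset.sum_nonneg fun p _ => by positivity)
    calc Real.exp T * (∑ i, hfun k n (v i) * lam + β * ∑ p ∈ P, ((p:ℝ)⁻¹)^2)
        = Real.exp T * (lam * ∑ i, hfun k n (v i)) + Real.exp T * (β * ∑ p ∈ P, ((p:ℝ)⁻¹)^2) := by
          rw [mul_add]
          congr 2
          rw [Finset.mul_sum]
          exact Finset.sum_congr rfl fun i _ => by ring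
      _ ≤ lam * Real.exp T * ∑ i, hfun k n (v i) + 1 := by
          have : Real.exp T * (β * ∑ p ∈ P, ((p:ℝ)⁻¹)^2) ≤ 1 := by
            calc Real.exp T * (β * ∑ p ∈ P, ((p:ℝ)⁻¹)^2) ≤ Real.exp T * (β * (k:ℝ)⁻¹) :=
                  mul_le_mul_of_nonneg_left hB hTnn
              _ ≤ 1 := hB2
          nlinarith [this]
  calc ∑ x ∈ Finset.Icc 1 n, Real.exp (lam * ∑ i, (c2 k n (v i) x : ℝ) + β * hfun k n x)
      = ∑ x ∈ Finset.Icc 1 n, Real.exp (∑ p ∈ P.filter (· ∣ x), t p) := by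
        exact Finset.sum_congr rfl fun x _ => by rw [hident x]
    _ ≤ (n : ℝ) * Real.exp (Real.exp T * ∑ p ∈ P, t p * (p : ℝ)⁻¹) :=
        step_general k n T t ht0 htT
    _ ≤ (n : ℝ) * Real.exp (lam * Real.exp (lam * n + 1) * ∑ i, hfun k n (v i) + 1) := by
        apply mul_le_mul_of_nonneg_left _ (Nat.cast_nonneg n)
        rw [Real.exp_le_exp]
        rw [← hT]
        exact hident2

lemma sum_piFinset_snoc {M : Type*} [AddCommMonoid M] (m : ℕ) (S : Finset ℕ)
    (g : (Fin (m+1) → ℕ) → M) :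
    ∑ f ∈ Fintype.piFinset (fun _ : Fin (m+1) => S), g f
      = ∑ v ∈ Fintype.piFinset (fun _ : Fin m => S), ∑ x ∈ S, g (Fin.snoc v x) := by
  rw [← Finset.sum_product']
  refine (Finset.sum_nbij' (fun f => (Fin.init f, f (Fin.last m)))
    (fun q => Fin.snoc q.1 q.2) ?_ ?_ ?_ ?_ ?_).symm.symm
  · intro f hf
    rw [Fintype.mem_piFinset] at hf
    refine Finset.mem_product.2 ⟨?_, hf _⟩
    rw [Fintype.mem_piFinset]
    intro i; exact hf _
  · intro q hq
    rw [Finset.mem_product] at hq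
    rw [Fintype.mem_piFinset]
    intro i
    induction i using Fin.lastCases with
    | last => simpa using hq.2
    | cast j => simpa using Fintype.mem_piFinset.1 hq.1 j
  · intro f _; exact Fin.snoc_init_self f
  · intro q _
    refine Prod.ext ?_ ?_
    · simp [Fin.init_snoc]
    · simp [Fin.snoc_last]
  · intro f _
    rw [Fin.snoc_init_self]
lemma Qm_snoc (k n : ℕ) {m : ℕ} (v : Fin m → ℕ) (x : ℕ) :
    Qm k n (Fin.snoc v x : Fin (m+1) → ℕ) = Qm k n v + ∑ i : Fin m, c2 k n (v i) x := by
  rw [Qm, Fin.sum_univ_castSucc]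
  congr 1
  · rw [Qm]
    refine Finset.sum_congr rfl fun j _ => ?_
    rw [Finset.sum_filter, Finset.sum_filter, Fin.sum_univ_castSucc]
    have hlast : ¬ ((Fin.last m : Fin (m+1)) : ℕ) < ((Fin.castSucc j : Fin (m+1)) : ℕ) := by
      simp [Fin.lt_iff_val_lt_val]
    rw [if_neg hlast, add_zero]
    refine Finset.sum_congr rfl fun i _ => ?_
    simp only [Fin.coe_castSucc, Fin.snoc_castSucc]
  · rw [Finset.sum_filter, Fin.sum_univ_castSucc]
    have : ¬ ((Fin.last m : Fin (m+1)) : ℕ) < ((Fin.last m : Fin (m+1)) : ℕ) := lt_irrefl _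
    rw [if_neg this, add_zero, Fin.snoc_last]
    refine Finset.sum_congr rfl fun i _ => ?_
    have : ((Fin.castSucc i : Fin (m+1)) : ℕ) < ((Fin.last m : Fin (m+1)) : ℕ) := by
      simp [Fin.lt_iff_val_lt_val]
    rw [if_pos this, Fin.snoc_castSucc]

lemma hsum_snoc (k n : ℕ) {m : ℕ} (v : Fin m → ℕ) (x : ℕ) :
    ∑ i : Fin (m+1), hfun k n ((Fin.snoc v x : Fin (m+1) → ℕ) i)
      = (∑ i : Fin m, hfun k n (v i)) + hfun k n x := by
  rw [Fin.sum_univ_castSucc]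
  simp [Fin.snoc_castSucc, Fin.snoc_last]

lemma main_induction (k n : ℕ) (hk1 : 1 ≤ k) (lam β₀ : ℝ) (hlam : 0 ≤ lam)
    (hβ₀k : β₀ ≤ k) (hkE : Real.exp (lam * n + 1) * β₀ ≤ k) :
    ∀ m, m ≤ n → ∀ β, 0 ≤ β → β + m * (lam * Real.exp (lam * n + 1)) ≤ β₀ →
    ∑ f ∈ Fintype.piFinset (fun _ : Fin m => Finset.Icc 1 n),
        Real.exp (lam * (Qm k n f : ℝ) + β * ∑ i, hfun k n (f i))
      ≤ ((n : ℝ) * Real.exp 1) ^ m := by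
  have hγ : 0 ≤ lam * Real.exp (lam * n + 1) := by positivity
  set γ := lam * Real.exp (lam * n + 1) with hγdef
  intro m
  induction m with
  | zero =>
    intro _ β hβ hββ₀
    simp [Qm]
  | succ m ih =>
    intro hmn β hβ hββ₀
    have hmn' : m ≤ n := Nat.le_of_succ_le hmn
    have hβ' : β ≤ β₀ := by
      have : 0 ≤ ((m:ℝ)+1) * γ := by positivity
      push_cast at hββ₀
      linarith
    have hβk : β ≤ (k:ℝ) := le_trans hβ' hβ₀k
    have hkE' : Real.exp (lam * n + 1) * β ≤ (k:ℝ) := by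
      have h1 : Real.exp (lam * n + 1) * β ≤ Real.exp (lam * n + 1) * β₀ :=
        mul_le_mul_of_nonneg_left hβ' (Real.exp_nonneg _)
      linarith
    rw [sum_piFinset_snoc]
    have hstep : ∀ v ∈ Fintype.piFinset (fun _ : Fin m => Finset.Icc 1 n),
        ∑ x ∈ Finset.Icc 1 n,
          Real.exp (lam * (Qm k n (Fin.snoc v x : Fin (m+1) → ℕ) : ℝ)
            + β * ∑ i, hfun k n ((Fin.snoc v x : Fin (m+1) → ℕ) i))
        ≤ ((n:ℝ) * Real.exp 1) *
            Real.exp (lam * (Qm k n v : ℝ) + (β + γ) * ∑ i, hfun k n (v i)) := by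
      intro v _
      have heq : ∀ x : ℕ,
          lam * (Qm k n (Fin.snoc v x : Fin (m+1) → ℕ) : ℝ)
              + β * ∑ i, hfun k n ((Fin.snoc v x : Fin (m+1) → ℕ) i)
          = (lam * (Qm k n v : ℝ) + β * ∑ i, hfun k n (v i))
              + (lam * ∑ i, (c2 k n (v i) x : ℝ) + β * hfun k n x) := by
        intro x
        rw [Qm_snoc, hsum_snoc]
        push_cast
        ring
      calc ∑ x ∈ Finset.Icc 1 n,
            Real.exp (lam * (Qm k n (Fin.snoc v x : Fin (m+1) → ℕ) : ℝ)
              + β * ∑ i, hfun k n ((Fin.snoc v x : Fin (m+1) → ℕ) i))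
          = Real.exp (lam * (Qm k n v : ℝ) + β * ∑ i, hfun k n (v i)) *
              ∑ x ∈ Finset.Icc 1 n,
                Real.exp (lam * ∑ i, (c2 k n (v i) x : ℝ) + β * hfun k n x) := by
            rw [Finset.mul_sum]
            refine Finset.sum_congr rfl fun x _ => ?_
            rw [heq x, Real.exp_add]
        _ ≤ Real.exp (lam * (Qm k n v : ℝ) + β * ∑ i, hfun k n (v i)) *
              ((n : ℝ) * Real.exp (γ * ∑ i, hfun k n (v i) + 1)) := by
            apply mul_le_mul_of_nonneg_left _ (Real.exp_nonneg _)
            exact step_bound k n m hk1 hmn' lam β hlam hβ hβk hkE' v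
        _ = ((n:ℝ) * Real.exp 1) *
              Real.exp (lam * (Qm k n v : ℝ) + (β + γ) * ∑ i, hfun k n (v i)) := by
            rw [show lam * (Qm k n v : ℝ) + (β + γ) * ∑ i, hfun k n (v i)
                = (lam * (Qm k n v : ℝ) + β * ∑ i, hfun k n (v i))
                  + (γ * ∑ i, hfun k n (v i) + 1) + (-1) by ring]
            simp only [Real.exp_add, Real.exp_neg]
            field_simp
    calc ∑ v ∈ Fintype.piFinset (fun _ : Fin m => Finset.Icc 1 n), ∑ x ∈ Finset.Icc 1 n,
          Real.exp (lam * (Qm k n (Fin.snoc v x : Fin (m+1) → ℕ) : ℝ)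
            + β * ∑ i, hfun k n ((Fin.snoc v x : Fin (m+1) → ℕ) i))
        ≤ ∑ v ∈ Fintype.piFinset (fun _ : Fin m => Finset.Icc 1 n),
            ((n:ℝ) * Real.exp 1) *
              Real.exp (lam * (Qm k n v : ℝ) + (β + γ) * ∑ i, hfun k n (v i)) :=
          Finset.sum_le_sum hstep
      _ = ((n:ℝ) * Real.exp 1) *
            ∑ v ∈ Fintype.piFinset (fun _ : Fin m => Finset.Icc 1 n),
              Real.exp (lam * (Qm k n v : ℝ) + (β + γ) * ∑ i, hfun k n (v i)) := by
          rw [Finset.mul_sum]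
      _ ≤ ((n:ℝ) * Real.exp 1) * ((n:ℝ) * Real.exp 1) ^ m := by
          apply mul_le_mul_of_nonneg_left _ (by positivity)
          refine ih hmn' (β + γ) (by positivity) ?_
          push_cast at hββ₀ ⊢
          linarith
      _ = ((n:ℝ) * Real.exp 1) ^ (m+1) := by ring

lemma c2_symm (k n a b : ℕ) : c2 k n a b = c2 k n b a := by
  unfold c2
  congr 1
  ext p
  simp [and_comm]

lemma sum_sq_eq (k n : ℕ) (ω : Fin n → ℕ) :
    ∑ p ∈ primesIn k n, (Yp n p ω) ^ 2 = ∑ j : Fin n, ∑ i : Fin n, c2 k n (ω i) (ω j) := by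
  have hY : ∀ p, (Yp n p ω) ^ 2
      = ∑ j : Fin n, ∑ i : Fin n, if p ∣ ω i ∧ p ∣ ω j then 1 else 0 := by
    intro p
    rw [Yp, Finset.card_filter, sq, Finset.sum_mul_sum]
    refine Finset.sum_congr rfl fun j _ => Finset.sum_congr rfl fun i _ => ?_
    by_cases h1 : p ∣ ω i <;> by_cases h2 : p ∣ ω j <;> simp [h1, h2, and_comm]
  rw [Finset.sum_congr rfl fun p _ => hY p]
  rw [Finset.sum_comm]
  refine Finset.sum_congr rfl fun j _ => ?_
  rw [Finset.sum_comm]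
  refine Finset.sum_congr rfl fun i _ => ?_
  rw [c2, Finset.card_filter]

lemma sum_sq_split (k n : ℕ) (ω : Fin n → ℕ) :
    ∑ j : Fin n, ∑ i : Fin n, c2 k n (ω i) (ω j)
      = 2 * Qm k n ω + ∑ i : Fin n, c2 k n (ω i) (ω i) := by
  have split : ∀ j : Fin n, ∑ i : Fin n, c2 k n (ω i) (ω j)
      = (∑ i ∈ Finset.univ.filter (fun i : Fin n => (i:ℕ) < (j:ℕ)), c2 k n (ω i) (ω j))
        + ((∑ i ∈ Finset.univ.filter (fun i : Fin n => (j:ℕ) < (i:ℕ)), c2 k n (ω i) (ω j))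
        + c2 k n (ω j) (ω j)) := by
    intro j
    rw [← Finset.sum_filter_add_sum_filter_not Finset.univ (fun i : Fin n => (i:ℕ) < (j:ℕ))]
    congr 1
    rw [← Finset.sum_filter_add_sum_filter_not
      (Finset.univ.filter (fun i : Fin n => ¬ (i:ℕ) < (j:ℕ))) (fun i : Fin n => (j:ℕ) < (i:ℕ))]
    congr 1
    · congr 1
      ext i
      simp only [Finset.mem_filter, Finset.mem_univ, true_and]
      omega
    · have : (Finset.univ.filter (fun i : Fin n => ¬ (i:ℕ) < (j:ℕ))).filter
          (fun i : Fin n => ¬ (j:ℕ) < (i:ℕ)) = {j} := by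
        ext i
        simp only [Finset.mem_filter, Finset.mem_univ, true_and, Finset.mem_singleton]
        constructor
        · rintro ⟨h1, h2⟩; exact Fin.ext (by omega)
        · rintro rfl; omega
      rw [Finset.filter_filter] at this ⊢
      rw [this, Finset.sum_singleton]
  rw [Finset.sum_congr rfl fun j _ => split j]
  rw [Finset.sum_add_distrib, Finset.sum_add_distrib]
  have hQ' : ∑ j : Fin n, ∑ i ∈ Finset.univ.filter (fun i : Fin n => (j:ℕ) < (i:ℕ)),
      c2 k n (ω i) (ω j) = Qm k n ω := by
    have e1 : ∀ j : Fin n, ∑ i ∈ Finset.univ.filter (fun i : Fin n => (j:ℕ) < (i:ℕ)),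
        c2 k n (ω i) (ω j) = ∑ i : Fin n, if (j:ℕ) < (i:ℕ) then c2 k n (ω i) (ω j) else 0 :=
      fun j => Finset.sum_filter _ _
    rw [Finset.sum_congr rfl fun j _ => e1 j, Finset.sum_comm]
    rw [Qm]
    refine Finset.sum_congr rfl fun j _ => ?_
    rw [Finset.sum_filter]
    exact Finset.sum_congr rfl fun i _ => by
      rw [c2_symm]
  rw [hQ', Qm]
  ring
lemma prime_filter_card_le (k n x : ℕ) (hx1 : 1 ≤ x) (hxn : x ≤ n) :
    ((primesIn k n).filter (· ∣ x)).card ≤ Nat.log 2 n := by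
  set A := (primesIn k n).filter (· ∣ x) with hA
  have hprime : ∀ p ∈ A, Nat.Prime p := fun p hp =>
    (Finset.mem_filter.1 (Finset.mem_filter.1 hp).1).2
  have hdvd : (∏ p ∈ A, p) ∣ x :=
    Finset.prod_primes_dvd x (fun p hp => (hprime p hp).prime)
      (fun p hp => (Finset.mem_filter.1 hp).2)
  have h2 : 2 ^ A.card ≤ ∏ p ∈ A, p := by
    rw [← Finset.prod_const]
    exact Finset.prod_le_prod' fun p hp => (hprime p hp).two_le
  have h3 : (∏ p ∈ A, p) ≤ x := Nat.le_of_dvd (by omega) hdvd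
  have h4 : 2 ^ A.card ≤ n := le_trans h2 (le_trans h3 hxn)
  calc A.card = Nat.log 2 (2 ^ A.card) := (Nat.log_pow one_lt_two _).symm
    _ ≤ Nat.log 2 n := Nat.log_mono_right h4

lemma natlog_le (n : ℕ) (hn : 1 ≤ n) : (Nat.log 2 n : ℝ) ≤ 3 * Real.sqrt n := by
  have h1 : (2:ℝ) ^ (Nat.log 2 n) ≤ (n:ℝ) := by
    exact_mod_cast Nat.pow_log_le_self 2 (by omega)
  have hnpos : (0:ℝ) < n := by exact_mod_cast hn
  have h2 : (Nat.log 2 n : ℝ) * Real.log 2 ≤ Real.log n := by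
    calc (Nat.log 2 n : ℝ) * Real.log 2 = Real.log ((2:ℝ) ^ (Nat.log 2 n)) := by
          rw [Real.log_pow]
      _ ≤ Real.log n := Real.log_le_log (by positivity) h1
  have h3 : Real.log n ≤ 2 * Real.sqrt n := by
    have hsq : Real.log n = 2 * Real.log (Real.sqrt n) := by
      rw [Real.log_sqrt hnpos.le]; ring
    have : Real.log (Real.sqrt n) ≤ Real.sqrt n - 1 :=
      Real.log_le_sub_one_of_pos (Real.sqrt_pos.2 hnpos)
    rw [hsq]; nlinarith [Real.sqrt_nonneg (n:ℝ)]
  have hlog2 : (2:ℝ)/3 ≤ Real.log 2 := by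
    have h8 : Real.exp (2/3 : ℝ) < 2 := by
      by_contra hcon
      push_neg at hcon
      have h23 : Real.exp (2/3 : ℝ) ^ 3 = Real.exp 2 := by
        rw [← Real.exp_nat_mul]; norm_num
      have hcube : (2:ℝ)^3 ≤ Real.exp (2/3 : ℝ) ^ 3 :=
        pow_le_pow_left₀ (by norm_num) hcon 3
      have he2 : Real.exp 2 < 8 := by
        have hee : Real.exp 2 = Real.exp 1 * Real.exp 1 := by
          rw [← Real.exp_add]; norm_num
        have he : Real.exp 1 < 2.7182818286 := Real.exp_one_lt_d9
        rw [hee]; nlinarith [Real.exp_pos (1:ℝ)]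
      rw [h23] at hcube
      norm_num at hcube
      linarith
    have := (Real.lt_log_iff_exp_lt (by norm_num : (0:ℝ) < 2)).2 h8
    linarith
  have hlog2pos : (0:ℝ) < Real.log 2 := by linarith
  have h4 : (Nat.log 2 n : ℝ) ≤ Real.log n / Real.log 2 := by
    rw [le_div_iff₀ hlog2pos]; exact h2
  have hnR : (1:ℝ) ≤ (n:ℝ) := by exact_mod_cast hn
  have hlognn : 0 ≤ Real.log n := Real.log_nonneg hnR
  calc (Nat.log 2 n : ℝ) ≤ Real.log n / Real.log 2 := h4
    _ ≤ Real.log n / (2/3) := div_le_div_of_nonneg_left hlognn (by norm_num) hlog2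
    _ = 3/2 * Real.log n := by ring
    _ ≤ 3/2 * (2 * Real.sqrt n) := by linarith
    _ = 3 * Real.sqrt n := by ring

/-- For every `ε > 0`,
`limsup_{k→∞} limsup_{n→∞} (1/n)·log P(∑_{p ∈ S(k,n)} Y_p² > n²ε) = −∞`, i.e.
for every `M > 0` there exists `K` such that for all `k ≥ K` the inner limsup
over `n` is at most `−M` (the quantity `(1/n)·log P(⋯)` being `−∞` when the
probability vanishes). -/
theorem gcd_counts_superexponential_estimate (ε : ℝ) (hε : 0 < ε) :
    ∀ M : ℝ, 0 < M → ∃ K : ℕ, ∀ k ≥ K,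
      Filter.limsup
        (fun n : ℕ =>
          (((n : ℝ)⁻¹ : ℝ) : EReal) *
            ENNReal.log
              ((unifVec n) {ω | (n : ℝ) ^ 2 * ε < ∑ p ∈ primesIn k n, (Yp n p ω : ℝ) ^ 2}))
        atTop
      ≤ ((-M : ℝ) : EReal) := by
  intro M hM
  set c : ℝ := 4 * (M + 2) / ε with hc
  have hcpos : 0 < c := by positivity
  refine ⟨⌈c * Real.exp (2*c + 2)⌉₊ + 1, fun k hk => ?_⟩
  have hk1 : 1 ≤ k := le_trans (by omega) hk
  have hkc : c * Real.exp (2*c + 2) ≤ (k : ℝ) := by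
    calc c * Real.exp (2*c+2) ≤ (⌈c * Real.exp (2*c + 2)⌉₊ : ℝ) := Nat.le_ceil _
      _ ≤ (k:ℝ) := by exact_mod_cast le_trans (Nat.le_succ _) hk
  apply Filter.limsup_le_of_le (by isBoundedDefault)
  rw [Filter.eventually_atTop]
  refine ⟨max 1 ⌈(6/ε)^2⌉₊, fun n hn => ?_⟩
  have hn1 : 1 ≤ n := le_trans (le_max_left _ _) hn
  have hnR : (1:ℝ) ≤ n := by exact_mod_cast hn1
  have hnpos : (0:ℝ) < n := by linarith
  have hsqrt : 6/ε ≤ Real.sqrt n := by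
    have h1 : ((6/ε)^2 : ℝ) ≤ (n:ℝ) := by
      calc ((6/ε)^2 : ℝ) ≤ (⌈(6/ε)^2⌉₊ : ℝ) := Nat.le_ceil _
        _ ≤ (n:ℝ) := by exact_mod_cast le_trans (le_max_right _ _) hn
    calc 6/ε = Real.sqrt ((6/ε)^2) := (Real.sqrt_sq (by positivity)).symm
      _ ≤ Real.sqrt n := Real.sqrt_le_sqrt h1
  have hdiag_small : (n:ℝ) * (Nat.log 2 n : ℝ) ≤ ε/2 * (n:ℝ)^2 := by
    have h1 : (Nat.log 2 n : ℝ) ≤ 3 * Real.sqrt n := natlog_le n hn1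
    have h2 : 3 * Real.sqrt n ≤ ε/2 * n := by
      have hs : Real.sqrt n * Real.sqrt n = (n:ℝ) := Real.mul_self_sqrt hnpos.le
      have h6 : (6/ε) * Real.sqrt n ≤ (n:ℝ) := by
        nlinarith [hsqrt, Real.sqrt_nonneg (n:ℝ)]
      have h7 : 3 * Real.sqrt n = (ε/2) * ((6/ε) * Real.sqrt n) := by
        field_simp
        ring
      rw [h7]
      exact mul_le_mul_of_nonneg_left h6 (by positivity)
    calc (n:ℝ) * (Nat.log 2 n : ℝ) ≤ (n:ℝ) * (ε/2 * n) :=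
          mul_le_mul_of_nonneg_left (le_trans h1 h2) hnpos.le
      _ = ε/2 * (n:ℝ)^2 := by ring
  -- parameters
  set lam : ℝ := c / n with hlam_def
  have hlam : 0 ≤ lam := by positivity
  have hlamn : lam * (n:ℝ) = c := by
    rw [hlam_def]
    field_simp
  set β₀ : ℝ := c * Real.exp (c + 1) with hβ₀def
  have hexpexp : Real.exp (c+1) * Real.exp (c+1) = Real.exp (2*c+2) := by
    rw [← Real.exp_add]; congr 1; ring
  have hβ₀k : β₀ ≤ (k:ℝ) := by
    have : Real.exp (c+1) ≤ Real.exp (2*c+2) := Real.exp_le_exp.2 (by linarith)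
    calc β₀ ≤ c * Real.exp (2*c+2) := mul_le_mul_of_nonneg_left this hcpos.le
      _ ≤ (k:ℝ) := hkc
  have hkE : Real.exp (lam * n + 1) * β₀ ≤ (k:ℝ) := by
    rw [hlamn]
    calc Real.exp (c+1) * β₀ = (Real.exp (c+1) * Real.exp (c+1)) * c := by
          rw [hβ₀def]; ring
      _ = c * Real.exp (2*c+2) := by rw [hexpexp]; ring
      _ ≤ (k:ℝ) := hkc
  set A : Set (Fin n → ℕ) :=
    {ω | (n : ℝ) ^ 2 * ε < ∑ p ∈ primesIn k n, (Yp n p ω : ℝ) ^ 2} with hA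
  set E := (Fintype.piFinset fun _ : Fin n => Finset.Icc 1 n).filter (· ∈ A) with hE
  have key : ∀ f ∈ E, ε/4 * (n:ℝ)^2 < (Qm k n f : ℝ) := by
    intro f hf
    rw [hE, Finset.mem_filter] at hf
    obtain ⟨hbox, hfA⟩ := hf
    have hfA' : (n : ℝ) ^ 2 * ε < ∑ p ∈ primesIn k n, (Yp n p f : ℝ) ^ 2 := hfA
    have hNat := (sum_sq_eq k n f).trans (sum_sq_split k n f)
    have hcast : ∑ p ∈ primesIn k n, (Yp n p f : ℝ)^2
        = 2*(Qm k n f : ℝ) + ∑ i : Fin n, (c2 k n (f i) (f i) : ℝ) := by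
      exact_mod_cast congrArg (Nat.cast : ℕ → ℝ) hNat
    have hdiag : ∑ i : Fin n, (c2 k n (f i) (f i) : ℝ) ≤ (n:ℝ) * (Nat.log 2 n : ℝ) := by
      have hone : ∀ i : Fin n, (c2 k n (f i) (f i) : ℝ) ≤ (Nat.log 2 n : ℝ) := by
        intro i
        have hfi := Fintype.mem_piFinset.1 hbox i
        rw [Finset.mem_Icc] at hfi
        have hle : c2 k n (f i) (f i) ≤ Nat.log 2 n := by
          rw [c2]
          have heq : ((primesIn k n).filter fun p => p ∣ f i ∧ p ∣ f i)
              = (primesIn k n).filter (· ∣ f i) := by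
            apply Finset.filter_congr; intro p _; simp
          rw [heq]
          exact prime_filter_card_le k n (f i) hfi.1 hfi.2
        exact_mod_cast hle
      calc ∑ i : Fin n, (c2 k n (f i) (f i) : ℝ) ≤ ∑ _i : Fin n, (Nat.log 2 n : ℝ) :=
            Finset.sum_le_sum fun i _ => hone i
        _ = (n:ℝ) * (Nat.log 2 n : ℝ) := by rw [Finset.sum_const]; simp [mul_comm]
    linarith
  have hcard : (E.card : ℝ) ≤ Real.exp (-(lam * (ε/4 * (n:ℝ)^2)))
      * ((n:ℝ) * Real.exp 1)^n := by
    have hcond : (0:ℝ) + (n:ℝ) * (lam * Real.exp (lam * (n:ℝ) + 1)) ≤ β₀ := by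
      rw [hlamn, zero_add, show (n:ℝ) * (lam * Real.exp (c+1))
        = (lam * (n:ℝ)) * Real.exp (c+1) by ring, hlamn]
    have h5 := main_induction k n hk1 lam β₀ hlam hβ₀k hkE n le_rfl 0 le_rfl hcond
    have h2 : (E.card : ℝ) ≤ ∑ f ∈ E, Real.exp (lam * (Qm k n f : ℝ) - lam * (ε/4 * (n:ℝ)^2)) := by
      rw [show ((E.card : ℝ)) = ∑ _f ∈ E, (1:ℝ) by simp]
      refine Finset.sum_le_sum fun f hf => ?_
      rw [show (1:ℝ) = Real.exp 0 from Real.exp_zero.symm]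
      apply Real.exp_le_exp.2
      have hQ := key f hf
      nlinarith
    have h3 : ∑ f ∈ E, Real.exp (lam * (Qm k n f : ℝ) - lam * (ε/4 * (n:ℝ)^2))
        = Real.exp (-(lam * (ε/4 * (n:ℝ)^2))) * ∑ f ∈ E, Real.exp (lam * (Qm k n f : ℝ)) := by
      rw [Finset.mul_sum]
      refine Finset.sum_congr rfl fun f _ => ?_
      rw [← Real.exp_add]; ring_nf
    have h4 : ∑ f ∈ E, Real.exp (lam * (Qm k n f : ℝ))
        ≤ ∑ f ∈ Fintype.piFinset (fun _ : Fin n => Finset.Icc 1 n),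
            Real.exp (lam * (Qm k n f : ℝ)) := by
      rw [hE]
      exact Finset.sum_le_sum_of_subset_of_nonneg (Finset.filter_subset _ _)
        (fun f _ _ => Real.exp_nonneg _)
    have h5' : ∑ f ∈ Fintype.piFinset (fun _ : Fin n => Finset.Icc 1 n),
        Real.exp (lam * (Qm k n f : ℝ)) ≤ ((n:ℝ) * Real.exp 1)^n := by
      refine le_trans (le_of_eq ?_) h5
      refine Finset.sum_congr rfl fun f _ => ?_
      norm_num
    calc (E.card : ℝ) ≤ _ := h2
      _ = _ := h3
      _ ≤ Real.exp (-(lam * (ε/4 * (n:ℝ)^2))) * ((n:ℝ) * Real.exp 1)^n :=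
          mul_le_mul_of_nonneg_left (le_trans h4 h5') (Real.exp_nonneg _)
  have hreal : (E.card : ℝ) * (((n:ℝ))^n)⁻¹ ≤ Real.exp (-(M+1) * n) := by
    have hnn : (0:ℝ) < ((n:ℝ))^n := by positivity
    have hexp_eq : Real.exp (-(lam * (ε/4 * (n:ℝ)^2))) * ((n:ℝ) * Real.exp 1)^n
        * (((n:ℝ))^n)⁻¹ = Real.exp (-(lam * (ε/4 * (n:ℝ)^2)) + n) := by
      rw [mul_pow, Real.exp_add]
      rw [show Real.exp ((n:ℕ):ℝ) = Real.exp 1 ^ (n:ℕ) by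
        rw [← Real.exp_nat_mul]; norm_num]
      field_simp
    have harg : -(lam * (ε/4 * (n:ℝ)^2)) + n = -(M+1) * n := by
      have h1 : lam * (ε/4 * (n:ℝ)^2) = (M+2) * n := by
        rw [hlam_def, hc]
        field_simp
      rw [h1]; ring
    calc (E.card : ℝ) * (((n:ℝ))^n)⁻¹
        ≤ (Real.exp (-(lam * (ε/4 * (n:ℝ)^2))) * ((n:ℝ) * Real.exp 1)^n) * (((n:ℝ))^n)⁻¹ :=
          mul_le_mul_of_nonneg_right hcard (by positivity)
      _ = Real.exp (-(lam * (ε/4 * (n:ℝ)^2)) + n) := hexp_eq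
      _ = Real.exp (-(M+1) * n) := by rw [harg]
  have hmeas : unifVec n A ≤ ENNReal.ofReal (Real.exp (-(M+1) * n)) := by
    refine le_trans (unifVec_le_card n hn1 A) ?_
    have hn_cast : ((n:ℝ≥0∞))^n = ENNReal.ofReal ((n:ℝ)^n) := by
      rw [← ENNReal.ofReal_natCast n, ← ENNReal.ofReal_pow (by positivity)]
    rw [hn_cast, ← ENNReal.ofReal_inv_of_pos (by positivity),
      ← ENNReal.ofReal_natCast (E.card), ← ENNReal.ofReal_mul (by positivity)]
    exact ENNReal.ofReal_le_ofReal hreal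
  have hlog : ENNReal.log (unifVec n A) ≤ ((-(M+1) * n : ℝ) : EReal) := by
    refine le_trans (ENNReal.log_monotone hmeas) ?_
    rw [ENNReal.log_ofReal_of_pos (Real.exp_pos _), Real.log_exp]
  calc (((n : ℝ)⁻¹ : ℝ) : EReal) * ENNReal.log (unifVec n A)
      ≤ (((n : ℝ)⁻¹ : ℝ) : EReal) * ((-(M+1) * n : ℝ) : EReal) :=
        mul_le_mul_of_nonneg_left hlog (by exact_mod_cast inv_nonneg.2 hnpos.le)
    _ = (((n : ℝ)⁻¹ * (-(M+1) * (n:ℝ)) : ℝ) : EReal) := (EReal.coe_mul _ _).symm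
    _ = ((-(M+1) : ℝ) : EReal) := by
        have : ((n : ℝ)⁻¹ * (-(M+1) * (n:ℝ)) : ℝ) = -(M+1) := by field_simp
        rw [this]
    _ ≤ ((-M : ℝ) : EReal) := by
        rw [EReal.coe_le_coe_iff]
        linarith
end

section
/- There exists K such that for all k₂ ≥ K, all k₁ < k₂, all n ∈ ℕ, and every subset T of S(k₁,k₂): (1/n)·#{ x ∈ {1,…,n} : {q ∈ S(k₁,k₂) : q divides x} = T } ≤ e^{4·log log k₂} · ∏_{q ∈ T} (1/q) · ∏_{q ∈ S(k₁,k₂)∖T} (1 − 1/q). -/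
open Real

open Finset
lemma block_pow_le (j : ℕ) :
    ((3:ℕ)^j) ^ (primesIn (3^j) (3^(j+1))).card ≤ 4 ^ (3^(j+1)) := by
  calc ((3:ℕ)^j) ^ (primesIn (3^j) (3^(j+1))).card
      ≤ ∏ p ∈ primesIn (3^j) (3^(j+1)), p := by
        apply Finset.pow_card_le_prod
        intro p hp
        simp only [primesIn, Finset.mem_filter, Finset.mem_Ioc] at hp
        exact hp.1.1.le
    _ ≤ primorial (3^(j+1)) := by
        apply Finset.prod_le_prod_of_subset_of_one_le' (f := fun p => p)
        · intro p hp
          simp only [primesIn, Finset.mem_filter, Finset.mem_Ioc] at hp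
          simp only [primorial, Finset.mem_filter, Finset.mem_range]
          exact ⟨Nat.lt_succ_of_le hp.1.2, hp.2⟩
        · intro p hp _
          exact (Finset.mem_filter.1 hp).2.one_lt.le
    _ ≤ 4 ^ (3^(j+1)) := primorial_le_4_pow _

lemma log_three_ge : (1.0921:ℝ) ≤ Real.log 3 := by
  have h1 : Real.log (64/81 : ℝ) ≤ 64/81 - 1 := Real.log_le_sub_one_of_pos (by norm_num)
  have h2 : (17/81 : ℝ) ≤ Real.log (81/64) := by
    rw [show (81/64 : ℝ) = (64/81)⁻¹ by norm_num, Real.log_inv]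
    linarith
  have h3 : Real.log (81 : ℝ) = 6 * Real.log 2 + Real.log (81/64) := by
    rw [show (81:ℝ) = 2^6 * (81/64) by norm_num, Real.log_mul (by positivity) (by norm_num),
      Real.log_pow]
    push_cast; ring
  have h4 : Real.log (81 : ℝ) = 4 * Real.log 3 := by
    rw [show (81:ℝ) = 3^4 by norm_num, Real.log_pow]; push_cast; ring
  have hl2 := Real.log_two_gt_d9
  linarith

lemma block_sum_le (j : ℕ) (hj : 1 ≤ j) :
    ∑ p ∈ primesIn (3^j) (3^(j+1)), (1 / ((p:ℝ) - 1)) ≤ 3.82 / j := by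
  set s := primesIn (3^j) (3^(j+1)) with hs
  have hcard : (s.card : ℝ) * (j * Real.log 3) ≤ 3^(j+1) * Real.log 4 := by
    have hR : ((3:ℝ)^j) ^ s.card ≤ (4:ℝ) ^ ((3:ℕ)^(j+1)) := by
      exact_mod_cast block_pow_le j
    have hlog := Real.log_le_log (by positivity) hR
    rw [Real.log_pow, Real.log_pow, Real.log_pow] at hlog
    push_cast at hlog ⊢
    nlinarith [Real.log_nonneg (by norm_num : (1:ℝ) ≤ 3), Real.log_nonneg (by norm_num : (1:ℝ) ≤ 4)]
  have hterm : ∀ p ∈ s, (1 / ((p:ℝ) - 1)) ≤ 1 / 3^j := by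
    intro p hp
    simp only [hs, primesIn, Finset.mem_filter, Finset.mem_Ioc] at hp
    have : (3:ℝ)^j ≤ (p:ℝ) - 1 := by
      have : (3:ℕ)^j + 1 ≤ p := hp.1.1
      have := (Nat.cast_le (α := ℝ)).2 this
      push_cast at this ⊢
      linarith
    have h3 : (0:ℝ) < 3^j := by positivity
    exact one_div_le_one_div_of_le h3 this
  have hsum : ∑ p ∈ s, (1 / ((p:ℝ) - 1)) ≤ s.card / 3^j := by
    calc ∑ p ∈ s, (1 / ((p:ℝ) - 1)) ≤ ∑ _p ∈ s, (1 / (3:ℝ)^j) := Finset.sum_le_sum hterm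
      _ = s.card / 3^j := by rw [Finset.sum_const, nsmul_eq_mul]; ring
  have hjpos : (0:ℝ) < j := by exact_mod_cast hj
  have h3pos : (0:ℝ) < 3^j := by positivity
  have hlog3 : (1:ℝ) ≤ Real.log 3 := by linarith [log_three_ge]
  have hlog4 : Real.log (4:ℝ) = 2 * Real.log 2 := by
    rw [show (4:ℝ) = 2^2 by norm_num, Real.log_pow]; push_cast; ring
  have hl2 := Real.log_two_lt_d9
  -- card ≤ 3^(j+1) * log 4 / (j * log 3)
  have hcard' : (s.card : ℝ) ≤ 3^(j+1) * Real.log 4 / (j * Real.log 3) := by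
    rw [le_div_iff₀ (by positivity)]
    exact hcard
  calc ∑ p ∈ s, (1 / ((p:ℝ) - 1)) ≤ s.card / 3^j := hsum
    _ ≤ (3^(j+1) * Real.log 4 / (j * Real.log 3)) / 3^j := by
        apply div_le_div_of_nonneg_right hcard' h3pos.le |>.trans_eq rfl
    _ = 3 * Real.log 4 / (j * Real.log 3) := by
        rw [pow_succ]
        field_simp
    _ ≤ 3.82 / j := by
        rw [div_le_div_iff₀ (by positivity) hjpos]
        have : 3 * Real.log 4 ≤ 3.82 * Real.log 3 := by
          rw [hlog4]
          nlinarith [log_three_ge]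
        nlinarith [Real.log_nonneg (by norm_num : (1:ℝ) ≤ 3)]

lemma primesIn_union (a b : ℕ) (hab : a ≤ b) (c : ℕ) (hbc : b ≤ c) :
    primesIn a c = primesIn a b ∪ primesIn b c := by
  simp only [primesIn]
  rw [← Finset.filter_union, Finset.Ioc_union_Ioc_eq_Ioc hab hbc]

lemma primesIn_disjoint (a b c : ℕ) : Disjoint (primesIn a b) (primesIn b c) := by
  simp only [primesIn]
  apply Finset.disjoint_filter_filter
  rw [Finset.disjoint_left]
  intro p hp hp'
  simp only [Finset.mem_Ioc] at hp hp'
  omega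

lemma blocks_sum_le (J : ℕ) :
    ∑ p ∈ primesIn 0 (3^(J+1)), (1 / ((p:ℝ) - 1)) ≤ 3/2 + 3.82 * ∑ j ∈ Icc 1 J, (1/(j:ℝ)) := by
  induction J with
  | zero =>
      have : primesIn 0 (3^1) = {2, 3} := by decide
      rw [this]
      norm_num
  | succ J ih =>
      have hsplit : primesIn 0 (3^(J+2)) = primesIn 0 (3^(J+1)) ∪ primesIn (3^(J+1)) (3^(J+2)) :=
        primesIn_union 0 (3^(J+1)) (Nat.zero_le _) (3^(J+2))
          (Nat.pow_le_pow_right (by norm_num) (by omega))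
      rw [hsplit, Finset.sum_union (primesIn_disjoint _ _ _)]
      have hblock := block_sum_le (J+1) (by omega)
      have hIcc : ∑ j ∈ Icc 1 (J+1), (1/(j:ℝ)) = (∑ j ∈ Icc 1 J, (1/(j:ℝ))) + 1/((J:ℝ)+1) := by
        rw [Finset.sum_Icc_succ_top (by omega)]
        push_cast
        ring
      rw [hIcc]
      have : (3.82:ℝ) / ((J:ℝ)+1) = 3.82 * (1/((J:ℝ)+1)) := by ring
      push_cast at hblock
      linarith

lemma sum_Icc_one_div_le (J : ℕ) (hJ : 1 ≤ J) :
    ∑ j ∈ Icc 1 J, (1/(j:ℝ)) ≤ 1 + Real.log J := by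
  have h := harmonic_le_one_add_log J
  have : (harmonic J : ℝ) = ∑ j ∈ Icc 1 J, (1/(j:ℝ)) := by
    rw [harmonic_eq_sum_Icc]
    push_cast
    simp [one_div]
  linarith

noncomputable def K0 : ℕ := ⌈Real.exp (Real.exp 30)⌉₊

lemma term_nonneg {p : ℕ} (hp : p.Prime) : (0:ℝ) ≤ 1 / ((p:ℝ) - 1) := by
  have : (2:ℝ) ≤ p := by exact_mod_cast hp.two_le
  have : (0:ℝ) < (p:ℝ) - 1 := by linarith
  positivity

lemma mem_primesIn {a b p : ℕ} (h : p ∈ primesIn a b) : a < p ∧ p ≤ b ∧ p.Prime := by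
  simp only [primesIn, Finset.mem_filter, Finset.mem_Ioc] at h
  exact ⟨h.1.1, h.1.2, h.2⟩

lemma primeSum_le {k₂ : ℕ} (hk : K0 ≤ k₂) :
    ∑ p ∈ primesIn 0 k₂, (1 / ((p:ℝ) - 1)) ≤ 4 * Real.log (Real.log (k₂:ℝ)) := by
  have hc : Real.exp (Real.exp 30) ≤ (k₂:ℝ) :=
    (Nat.le_ceil _).trans (Nat.cast_le.2 hk)
  have he30 : (31:ℝ) ≤ Real.exp 30 := by linarith [Real.add_one_le_exp (30:ℝ)]
  have he : (32:ℝ) ≤ Real.exp (Real.exp 30) := by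
    calc (32:ℝ) ≤ Real.exp 30 + 1 := by linarith
      _ ≤ Real.exp (Real.exp 30) := by linarith [Real.add_one_le_exp (Real.exp 30)]
  have hk3 : 3 ≤ k₂ := by exact_mod_cast (by linarith : (3:ℝ) ≤ (k₂:ℝ))
  set J := Nat.log 3 k₂ with hJ
  have hJ1 : 1 ≤ J := by
    rw [hJ, Nat.le_log_iff_pow_le (by norm_num) (by omega)]
    simpa using hk3
  have hlt : k₂ < 3^(J+1) := Nat.lt_pow_succ_log_self (by norm_num) k₂
  have hsub : primesIn 0 k₂ ⊆ primesIn 0 (3^(J+1)) := by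
    intro p hp
    obtain ⟨h1, h2, h3⟩ := mem_primesIn hp
    simp only [primesIn, Finset.mem_filter, Finset.mem_Ioc]
    exact ⟨⟨h1, by omega⟩, h3⟩
  have h1 : ∑ p ∈ primesIn 0 k₂, (1 / ((p:ℝ) - 1))
      ≤ ∑ p ∈ primesIn 0 (3^(J+1)), (1 / ((p:ℝ) - 1)) := by
    apply Finset.sum_le_sum_of_subset_of_nonneg hsub
    intro p hp _
    exact term_nonneg (mem_primesIn hp).2.2
  have h2 := blocks_sum_le J
  have h3 := sum_Icc_one_div_le J hJ1
  -- J ≤ log k₂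
  have hpow : (3:ℝ)^J ≤ (k₂:ℝ) := by exact_mod_cast Nat.pow_log_le_self 3 (by omega : k₂ ≠ 0)
  have hlogk_pos : (0:ℝ) < Real.log k₂ := by
    apply Real.log_pos
    have : (1:ℝ) < 32 := by norm_num
    linarith
  have hJlog : (J:ℝ) ≤ Real.log k₂ := by
    have := Real.log_le_log (by positivity) hpow
    rw [Real.log_pow] at this
    nlinarith [log_three_ge, (by exact_mod_cast hJ1 : (1:ℝ) ≤ (J:ℝ))]
  have hloglog : Real.exp 30 ≤ Real.log k₂ := by
    have := Real.log_le_log (Real.exp_pos _) hc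
    rwa [Real.log_exp] at this
  have hL30 : (30:ℝ) ≤ Real.log (Real.log k₂) := by
    have := Real.log_le_log (Real.exp_pos 30) hloglog
    rwa [Real.log_exp] at this
  have hlogJ : Real.log J ≤ Real.log (Real.log k₂) :=
    Real.log_le_log (by exact_mod_cast hJ1) hJlog
  linarith

lemma exp_neg_le {q : ℕ} (hq : q.Prime) :
    Real.exp (-(1 / ((q:ℝ) - 1))) ≤ 1 - 1/(q:ℝ) := by
  have h2 : (2:ℝ) ≤ q := by exact_mod_cast hq.two_le
  have hq1 : (0:ℝ) < (q:ℝ) - 1 := by linarith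
  set t : ℝ := 1 / ((q:ℝ) - 1) with ht
  have htpos : 0 < t := by rw [ht]; positivity
  have h1 : t + 1 ≤ Real.exp t := by linarith [Real.add_one_le_exp t]
  rw [Real.exp_neg]
  have : (Real.exp t)⁻¹ ≤ (t + 1)⁻¹ :=
    inv_anti₀ (by linarith) h1
  apply this.trans
  have he : (t+1)⁻¹ = 1 - 1/(q:ℝ) := by
    rw [ht]
    have hq0 : (q:ℝ) ≠ 0 := by linarith
    field_simp
    ring
  rw [he]

/-- There exists `K` such that for all `k₂ ≥ K`, all
`k₁ < k₂`, all `n`, and every `T ⊆ S(k₁,k₂)`: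
`(1/n)·#{x ∈ {1,…,n} : {q ∈ S(k₁,k₂) : q ∣ x} = T}
  ≤ e^{4 log log k₂} · ∏_{q∈T} (1/q) · ∏_{q∈S(k₁,k₂)∖T} (1 − 1/q)`. -/
theorem density_of_prime_divisor_pattern :
    ∃ K : ℕ, ∀ k₂ ≥ K, ∀ k₁ < k₂, ∀ n : ℕ, ∀ T ⊆ primesIn k₁ k₂,
      (((Finset.Icc 1 n).filter
          (fun x : ℕ => (primesIn k₁ k₂).filter (fun q => q ∣ x) = T)).card : ℝ) / (n : ℝ)
        ≤ Real.exp (4 * Real.log (Real.log k₂)) *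
            ((∏ q ∈ T, (1 / (q : ℝ))) * ∏ q ∈ primesIn k₁ k₂ \ T, (1 - 1 / (q : ℝ))) := by
  refine ⟨K0, fun k₂ hk k₁ hk1 n T hT => ?_⟩
  set S := primesIn k₁ k₂ with hS
  set L := Real.log (Real.log (k₂:ℝ)) with hL
  have tprime : ∀ q ∈ T, q.Prime := fun q hq => (mem_primesIn (hT hq)).2.2
  set P : ℕ := ∏ q ∈ T, q with hP
  have hPpos : 0 < P := Finset.prod_pos fun q hq => (tprime q hq).pos
  -- A = 1/P
  have hA : (∏ q ∈ T, (1 / (q : ℝ))) = 1 / (P:ℝ) := by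
    rw [hP]
    push_cast
    rw [Finset.prod_div_distrib, Finset.prod_const_one]
  have hAnn : (0:ℝ) ≤ ∏ q ∈ T, (1 / (q : ℝ)) := Finset.prod_nonneg fun q _ => by positivity
  -- Step 1 : card bound
  have hsub : (Finset.Icc 1 n).filter
      (fun x : ℕ => S.filter (fun q => q ∣ x) = T) ⊆ (Finset.Ioc 0 n).filter (fun x => P ∣ x) := by
    intro x hx
    rw [Finset.mem_filter] at hx ⊢
    obtain ⟨hx1, hx2⟩ := hx
    constructor
    · rw [Finset.mem_Ioc]; rw [Finset.mem_Icc] at hx1; omega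
    · apply Finset.prod_primes_dvd x (fun q hq => Nat.Prime.prime (tprime q hq))
      intro q hq
      rw [← hx2] at hq
      exact (Finset.mem_filter.1 hq).2
  have hcard : ((Finset.Icc 1 n).filter
      (fun x : ℕ => S.filter (fun q => q ∣ x) = T)).card ≤ n / P := by
    rw [← Nat.Ioc_filter_dvd_card_eq_div]
    exact Finset.card_le_card hsub
  -- Step 2 : real bound  LHS ≤ A
  have hstep2 : (((Finset.Icc 1 n).filter
      (fun x : ℕ => S.filter (fun q => q ∣ x) = T)).card : ℝ) / (n : ℝ)
      ≤ ∏ q ∈ T, (1 / (q : ℝ)) := by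
    rcases Nat.eq_zero_or_pos n with rfl | hn
    · rw [Nat.cast_zero, div_zero]; exact hAnn
    · rw [hA]
      have h1 : (((Finset.Icc 1 n).filter
          (fun x : ℕ => S.filter (fun q => q ∣ x) = T)).card : ℝ) ≤ (n:ℝ) / (P:ℝ) :=
        le_trans (by exact_mod_cast hcard) (Nat.cast_div_le)
      rw [div_le_div_iff₀ (by exact_mod_cast hn) (by positivity)]
      calc (((Finset.Icc 1 n).filter
          (fun x : ℕ => S.filter (fun q => q ∣ x) = T)).card : ℝ) * P
          ≤ ((n:ℝ)/(P:ℝ)) * P := by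
            have hPn : (0:ℝ) ≤ (P:ℝ) := by positivity
            exact mul_le_mul_of_nonneg_right h1 hPn
        _ = 1 * n := by field_simp
  -- Step 3 : 1 ≤ exp(4L) * B
  have hBsub : S \ T ⊆ primesIn 0 k₂ := by
    intro q hq
    obtain ⟨h1, h2, h3⟩ := mem_primesIn (Finset.mem_sdiff.1 hq).1
    simp only [primesIn, Finset.mem_filter, Finset.mem_Ioc]
    exact ⟨⟨h3.pos, h2⟩, h3⟩
  have hsumBT : ∑ q ∈ S \ T, (1 / ((q:ℝ) - 1)) ≤ 4 * L := by
    refine le_trans (Finset.sum_le_sum_of_subset_of_nonneg hBsub ?_) (primeSum_le hk)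
    intro p hp _
    have h2 : (2:ℝ) ≤ p := by exact_mod_cast (mem_primesIn hp).2.2.two_le
    have : (0:ℝ) < (p:ℝ) - 1 := by linarith
    positivity
  have hBlow : Real.exp (-(4*L)) ≤ ∏ q ∈ S \ T, (1 - 1 / (q : ℝ)) := by
    calc Real.exp (-(4*L)) ≤ Real.exp (-(∑ q ∈ S \ T, (1 / ((q:ℝ) - 1)))) :=
          Real.exp_le_exp.2 (by linarith)
      _ = ∏ q ∈ S \ T, Real.exp (-(1 / ((q:ℝ) - 1))) := by
          rw [← Real.exp_sum, ← Finset.sum_neg_distrib]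
      _ ≤ ∏ q ∈ S \ T, (1 - 1 / (q : ℝ)) := by
          apply Finset.prod_le_prod (fun q _ => (Real.exp_pos _).le)
          intro q hq
          exact exp_neg_le (mem_primesIn (Finset.mem_sdiff.1 hq).1).2.2
  have hstep3 : (1:ℝ) ≤ Real.exp (4*L) * ∏ q ∈ S \ T, (1 - 1 / (q : ℝ)) := by
    calc (1:ℝ) = Real.exp (4*L) * Real.exp (-(4*L)) := by
          rw [← Real.exp_add]; simp
      _ ≤ Real.exp (4*L) * ∏ q ∈ S \ T, (1 - 1 / (q : ℝ)) :=
          mul_le_mul_of_nonneg_left hBlow (Real.exp_pos _).le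
  calc (((Finset.Icc 1 n).filter
      (fun x : ℕ => S.filter (fun q => q ∣ x) = T)).card : ℝ) / (n : ℝ)
      ≤ ∏ q ∈ T, (1 / (q : ℝ)) := hstep2
    _ = (∏ q ∈ T, (1 / (q : ℝ))) * 1 := by ring
    _ ≤ (∏ q ∈ T, (1 / (q : ℝ))) * (Real.exp (4*L) * ∏ q ∈ S \ T, (1 - 1 / (q : ℝ))) :=
        mul_le_mul_of_nonneg_left hstep3 hAnn
    _ = Real.exp (4 * L) * ((∏ q ∈ T, (1 / (q : ℝ))) * ∏ q ∈ S \ T, (1 - 1 / (q : ℝ))) := by ring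
end
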